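/- Let C be a Type I binary self-dual code of length 4n+2 satisfying the hypotheses of the shadow-subtraction theorem (minimum distance d+2 with d ≡ 0 mod 4, d ≠ 0, shadow minimum weight s ≥ 3), and let C' of length 4n with doubly-even subcode C₀' and shadow S' be the subtracted code constructed there. Then every weight occurring in S' is congruent to s−1 modulo 4, and S' contains a vector of weight s−1; hence the minimum weight of S' is exactly s−1. -/

import Mathlib

open Finset

/-- Hamming weight of a binary vector. -/
def wt {n : ℕ} (v : Fin n → ZMod 2) : ℕ := (Finset.univ.filter (fun i => v i ≠ 0)).card

/-- Standard inner product over GF(2). -/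
def inn {n : ℕ} (u v : Fin n → ZMod 2) : ZMod 2 := ∑ i, u i * v i

/-- A code is self-dual if it equals its dual. -/
def IsSelfDual {n : ℕ} (C : Submodule (ZMod 2) (Fin n → ZMod 2)) : Prop :=
  ∀ v, v ∈ C ↔ ∀ c ∈ C, inn v c = 0

/-- `C` has minimum distance (weight) `d`. -/
def HasMinDist {n : ℕ} (C : Submodule (ZMod 2) (Fin n → ZMod 2)) (d : ℕ) : Prop :=
  (∃ c ∈ C, c ≠ 0 ∧ wt c = d) ∧ ∀ c ∈ C, c ≠ 0 → d ≤ wt c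

/-- The shadow `S = C₀^⊥ \ C`, where `C₀` is the doubly-even subcode of `C`. -/
def shadow {n : ℕ} (C : Submodule (ZMod 2) (Fin n → ZMod 2)) : Set (Fin n → ZMod 2) :=
  {v | ∀ c ∈ C, wt c % 4 = 0 → inn v c = 0} \ (C : Set (Fin n → ZMod 2))

/-- Covering radius of a code. -/
noncomputable def coveringRadius {n : ℕ} (C : Submodule (ZMod 2) (Fin n → ZMod 2)) : ℕ :=
  sInf {R | ∀ v : Fin n → ZMod 2, ∃ c ∈ C, wt (v - c) ≤ R}

/-- Prepend two coordinates to a vector. -/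
def vcons2 {k : ℕ} (a b : ZMod 2) (v : Fin k → ZMod 2) : Fin (k + 2) → ZMod 2 :=
  Fin.cons a (Fin.cons b v)

/-!
For `u` in the shadow and `c ∈ C` one has `(u, c) ≡ wt c / 2 (mod 2)`. Hence the sum of two
shadow vectors is orthogonal to all of `C = C^⊥`, so the shadow is one coset `y + C` and its
weights are all congruent mod 4.

Take `y` in the shadow of weight `s` with `y i = 1`, `y j = 0`. The subtracted code `C'` is again
self-dual: it is self-orthogonal, and a vector orthogonal to `C'` extends by a suitable constant
pair on `{i, j}` to a vector orthogonal to `C`, using a codeword `z` with `z i ≠ z j` (one exists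
since `C` has no words of weight 2). The restriction `y'` of `y` lies in the shadow of `C'` and has
weight `s - 1`. Any `u` in that shadow is `y' + c'` with `c' ∈ C'`, so it lifts to a shadow vector
`y + c` of `C` of weight at most `wt u + 2`; thus `wt u ≥ s - 2`, and `wt u ≡ s - 1 (mod 4)`
forces `wt u ≥ s - 1`.
-/

open Function

lemma wt_eq_sum_val {m : ℕ} (v : Fin m → ZMod 2) : wt v = ∑ k, (v k).val := by
  rw [wt, Finset.card_filter]
  refine Finset.sum_congr rfl fun k _ => ?_
  generalize v k = x
  revert x
  decide

lemma wt_zero {m : ℕ} : wt (0 : Fin m → ZMod 2) = 0 := by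
  simp [wt]

lemma sum_eq_wt {m : ℕ} (v : Fin m → ZMod 2) : ∑ k, v k = (wt v : ZMod 2) := by
  simp [wt_eq_sum_val]

lemma inn_eq_dotProduct {m : ℕ} (u v : Fin m → ZMod 2) : inn u v = u ⬝ᵥ v := rfl

lemma inn_eq_wt_mul {m : ℕ} (u v : Fin m → ZMod 2) : inn u v = (wt (u * v) : ZMod 2) :=
  sum_eq_wt (u * v)

lemma inn_self {m : ℕ} (u : Fin m → ZMod 2) : inn u u = (wt u : ZMod 2) := by
  have hidem : ∀ x : ZMod 2, x * x = x := by decide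
  rw [inn_eq_wt_mul, show u * u = u from funext fun k => hidem (u k)]

lemma inn_add_left {m : ℕ} (u v w : Fin m → ZMod 2) : inn (u + v) w = inn u w + inn v w :=
  add_dotProduct u v w

lemma inn_add_right {m : ℕ} (u v w : Fin m → ZMod 2) : inn u (v + w) = inn u v + inn u w :=
  dotProduct_add u v w

lemma wt_add_add_two_mul_wt_mul {m : ℕ} (u v : Fin m → ZMod 2) :
    wt (u + v) + 2 * wt (u * v) = wt u + wt v := by
  simp only [wt_eq_sum_val, Finset.mul_sum, ← Finset.sum_add_distrib]
  refine Finset.sum_congr rfl fun k _ => ?_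
  simp only [Pi.add_apply, Pi.mul_apply]
  generalize u k = x
  generalize v k = y
  revert x y
  decide

lemma wt_add_mod_four {m : ℕ} (u v : Fin m → ZMod 2) :
    wt (u + v) % 4 = (wt u + wt v + 2 * (inn u v).val) % 4 := by
  have h := wt_add_add_two_mul_wt_mul u v
  rw [inn_eq_wt_mul, ZMod.val_natCast]
  omega

namespace IsSelfDual

variable {m : ℕ} {D : Submodule (ZMod 2) (Fin m → ZMod 2)}

lemma inn_eq_zero (hD : IsSelfDual D) {a b : Fin m → ZMod 2} (ha : a ∈ D) (hb : b ∈ D) :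
    inn a b = 0 :=
  (hD a).mp ha b hb

lemma wt_mod_two (hD : IsSelfDual D) {a : Fin m → ZMod 2} (ha : a ∈ D) : wt a % 2 = 0 := by
  have h := hD.inn_eq_zero ha ha
  rw [inn_self, ZMod.natCast_eq_zero_iff] at h
  omega

lemma one_mem (hD : IsSelfDual D) : (1 : Fin m → ZMod 2) ∈ D := by
  rw [hD]
  intro c hc
  rw [inn_eq_dotProduct, one_dotProduct, sum_eq_wt, ZMod.natCast_eq_zero_iff]
  exact Nat.dvd_of_mod_eq_zero (hD.wt_mod_two hc)

lemma inn_eq_one_of_mem_shadow (hD : IsSelfDual D) {u c : Fin m → ZMod 2}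
    (hu : u ∈ shadow D) (hc : c ∈ D) (hc2 : wt c % 4 = 2) : inn u c = 1 := by
  obtain ⟨c₂, hc₂, hinn₂⟩ : ∃ c₂ ∈ D, inn u c₂ ≠ 0 := by
    by_contra! h
    exact hu.2 ((hD u).mpr h)
  have hsum : wt (c + c₂) % 4 = 0 := by
    have h := wt_add_mod_four c c₂
    have hc₂2 : wt c₂ % 4 ≠ 0 := fun h0 => hinn₂ (hu.1 c₂ hc₂ h0)
    have := hD.wt_mod_two hc₂
    rw [hD.inn_eq_zero hc hc₂, ZMod.val_zero] at h
    omega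
  have h0 := hu.1 _ (D.add_mem hc hc₂) hsum
  rw [inn_add_right] at h0
  have key : ∀ x y : ZMod 2, y ≠ 0 → x + y = 0 → x = 1 := by decide
  exact key _ _ hinn₂ h0

lemma two_mul_val_inn_of_mem_shadow (hD : IsSelfDual D) {u c : Fin m → ZMod 2}
    (hu : u ∈ shadow D) (hc : c ∈ D) : 2 * (inn u c).val = wt c % 4 := by
  have := hD.wt_mod_two hc
  rcases (by omega : wt c % 4 = 0 ∨ wt c % 4 = 2) with h | h
  · rw [hu.1 c hc h, ZMod.val_zero, h]
  · rw [hD.inn_eq_one_of_mem_shadow hu hc h, ZMod.val_one, h]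

lemma add_mem_of_mem_shadow (hD : IsSelfDual D) {u w : Fin m → ZMod 2}
    (hu : u ∈ shadow D) (hw : w ∈ shadow D) : u + w ∈ D := by
  rw [hD]
  intro c hc
  have h : inn u c = inn w c := ZMod.val_injective 2 (by
    have := hD.two_mul_val_inn_of_mem_shadow hu hc
    have := hD.two_mul_val_inn_of_mem_shadow hw hc
    omega)
  rw [inn_add_left, h, CharTwo.add_self_eq_zero]

lemma add_mem_shadow (hD : IsSelfDual D) {u c : Fin m → ZMod 2}
    (hu : u ∈ shadow D) (hc : c ∈ D) : u + c ∈ shadow D := by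
  refine ⟨fun c' hc' h4 => ?_, fun h => hu.2 (by simpa using D.sub_mem h hc)⟩
  rw [inn_add_left, hu.1 c' hc' h4, hD.inn_eq_zero hc hc', add_zero]

lemma wt_mod_four_eq_of_mem_shadow (hD : IsSelfDual D) {u w : Fin m → ZMod 2}
    (hu : u ∈ shadow D) (hw : w ∈ shadow D) : wt u % 4 = wt w % 4 := by
  have hc := hD.add_mem_of_mem_shadow hu hw
  have h := wt_add_mod_four u (u + w)
  rw [show u + (u + w) = w from funext fun k => CharTwo.add_cancel_left _ _,
    hD.two_mul_val_inn_of_mem_shadow hu hc] at h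
  have := hD.wt_mod_two hc
  omega

lemma exists_eq_one_and_eq_zero_of_mem_shadow (hD : IsSelfDual D) {y : Fin m → ZMod 2}
    (hy : y ∈ shadow D) : ∃ i j, y i = 1 ∧ y j = 0 := by
  have hne0 : ∀ x : ZMod 2, x ≠ 0 → x = 1 := by decide
  have hne1 : ∀ x : ZMod 2, x ≠ 1 → x = 0 := by decide
  obtain ⟨i, hi⟩ := Function.ne_iff.mp fun h : y = 0 => hy.2 (h ▸ D.zero_mem)
  obtain ⟨j, hj⟩ := Function.ne_iff.mp fun h : y = 1 => hy.2 (h ▸ hD.one_mem)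
  exact ⟨i, j, hne0 _ hi, hne1 _ hj⟩

end IsSelfDual

section PairPuncture

variable {N K : ℕ} {i j : Fin N} {f : Fin K → Fin N}

lemma sum_eq_add_add_sum_comp {M : Type*} [AddCommMonoid M] (hij : i ≠ j) (hf : Injective f)
    (hr : Set.range f = {i, j}ᶜ) (F : Fin N → M) : ∑ k, F k = F i + F j + ∑ t, F (f t) := by
  classical
  have himage : Finset.univ.map ⟨f, hf⟩ = ({i, j} : Finset (Fin N))ᶜ := by
    ext k
    simpa using congrArg (k ∈ ·) hr
  rw [← Finset.sum_add_sum_compl {i, j} F, Finset.sum_pair hij, ← himage, Finset.sum_map]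
  rfl

lemma wt_eq_val_add_val_add_wt_comp (hij : i ≠ j) (hf : Injective f)
    (hr : Set.range f = {i, j}ᶜ) (v : Fin N → ZMod 2) :
    wt v = (v i).val + (v j).val + wt (v ∘ f) := by
  rw [wt_eq_sum_val, wt_eq_sum_val]
  exact sum_eq_add_add_sum_comp hij hf hr _

lemma wt_le_wt_comp_add_two (hij : i ≠ j) (hf : Injective f)
    (hr : Set.range f = {i, j}ᶜ) (v : Fin N → ZMod 2) : wt v ≤ wt (v ∘ f) + 2 := by
  have := (v i).val_lt
  have := (v j).val_lt
  rw [wt_eq_val_add_val_add_wt_comp hij hf hr]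
  omega

lemma inn_eq_add_add_inn_comp (hij : i ≠ j) (hf : Injective f)
    (hr : Set.range f = {i, j}ᶜ) (v w : Fin N → ZMod 2) :
    inn v w = v i * w i + v j * w j + inn (v ∘ f) (w ∘ f) :=
  sum_eq_add_add_sum_comp hij hf hr _

lemma extend_const_apply_of_eq_or_eq (hr : Set.range f = {i, j}ᶜ) (v : Fin K → ZMod 2)
    (a : ZMod 2) {k : Fin N} (hk : k = i ∨ k = j) : extend f v (fun _ => a) k = a := by
  refine extend_apply' _ _ _ fun ⟨t, ht⟩ => ?_
  have := Set.mem_range_self (f := f) t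
  rw [hr, ht] at this
  simp [hk] at this

lemma inn_extend_const (hij : i ≠ j) (hf : Injective f) (hr : Set.range f = {i, j}ᶜ)
    (v : Fin K → ZMod 2) (a : ZMod 2) (c : Fin N → ZMod 2) :
    inn (extend f v fun _ => a) c = a * (c i + c j) + inn v (c ∘ f) := by
  rw [inn_eq_add_add_inn_comp hij hf hr, extend_comp hf,
    extend_const_apply_of_eq_or_eq hr v a (.inl rfl),
    extend_const_apply_of_eq_or_eq hr v a (.inr rfl), mul_add]

lemma wt_extend_const (hij : i ≠ j) (hf : Injective f) (hr : Set.range f = {i, j}ᶜ)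
    (v : Fin K → ZMod 2) (a : ZMod 2) : wt (extend f v fun _ => a) = 2 * a.val + wt v := by
  rw [wt_eq_val_add_val_add_wt_comp hij hf hr, extend_comp hf,
    extend_const_apply_of_eq_or_eq hr v a (.inl rfl),
    extend_const_apply_of_eq_or_eq hr v a (.inr rfl)]
  ring

end PairPuncture

namespace IsSelfDual

variable {N K : ℕ} {i j : Fin N} {f : Fin K → Fin N}
  {C : Submodule (ZMod 2) (Fin N → ZMod 2)} {C' : Submodule (ZMod 2) (Fin K → ZMod 2)}

lemma exists_mem_add_eq_one (hD : IsSelfDual C) (hij : i ≠ j) (hf : Injective f)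
    (hr : Set.range f = {i, j}ᶜ) (hwt : ∀ c ∈ C, c ≠ 0 → 3 ≤ wt c) :
    ∃ z ∈ C, z i + z j = 1 := by
  by_contra! h
  have hne1 : ∀ x : ZMod 2, x ≠ 1 → x = 0 := by decide
  set e := extend f (0 : Fin K → ZMod 2) fun _ => 1
  have he : e ∈ C := by
    rw [hD]
    intro c hc
    rw [inn_extend_const hij hf hr, one_mul, hne1 _ (h c hc), zero_add]
    exact zero_dotProduct _
  have hwt2 : wt e = 2 := by rw [wt_extend_const hij hf hr, wt_zero, ZMod.val_one]
  have hne : e ≠ 0 := fun h0 => by rw [h0, wt_zero] at hwt2; omega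
  have := hwt e he hne
  omega

lemma subtract (hD : IsSelfDual C) (hij : i ≠ j) (hf : Injective f)
    (hr : Set.range f = {i, j}ᶜ) (hz : ∃ z ∈ C, z i + z j = 1)
    (hC' : ∀ x, x ∈ C' ↔ ∃ c ∈ C, c i = c j ∧ x = c ∘ f) : IsSelfDual C' := by
  intro v
  constructor
  · intro hv x hx
    obtain ⟨c, hc, hcij, rfl⟩ := (hC' v).mp hv
    obtain ⟨c', hc', hcij', rfl⟩ := (hC' x).mp hx
    have h := inn_eq_add_add_inn_comp hij hf hr c c'
    rw [hD.inn_eq_zero hc hc', ← hcij, ← hcij', CharTwo.add_self_eq_zero, zero_add] at h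
    exact h.symm
  · intro hv
    obtain ⟨z, hzC, hz1⟩ := hz
    have hperp : ∀ c ∈ C, c i = c j → inn v (c ∘ f) = 0 :=
      fun c hc hcij => hv _ ((hC' _).mpr ⟨c, hc, hcij, rfl⟩)
    -- Every codeword lies in `C ∩ {c i = c j}` or in its translate by `z`; this fixes the constant.
    have hext : extend f v (fun _ => inn v (z ∘ f)) ∈ C := by
      rw [hD]
      intro c hc
      rw [inn_extend_const hij hf hr]
      by_cases hcij : c i = c j
      · rw [hcij, CharTwo.add_self_eq_zero, mul_zero, zero_add, hperp c hc hcij]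
      · have hsep : ∀ p q r t : ZMod 2, p ≠ q → r + t = 1 → p + q = 1 ∧ p + r = q + t := by
          decide
        obtain ⟨hc1, hcz⟩ := hsep _ _ _ _ hcij hz1
        have h := hperp _ (C.add_mem hc hzC) hcz
        rw [Pi.add_comp, inn_add_right] at h
        rw [hc1, mul_one, add_comm, h]
    refine (hC' v).mpr ⟨_, hext, ?_, (extend_comp hf _ _).symm⟩
    rw [extend_const_apply_of_eq_or_eq hr _ _ (.inl rfl),
      extend_const_apply_of_eq_or_eq hr _ _ (.inr rfl)]

lemma comp_mem_shadow_subtract (hD : IsSelfDual C) (hij : i ≠ j) (hf : Injective f)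
    (hr : Set.range f = {i, j}ᶜ) (hC' : ∀ x, x ∈ C' ↔ ∃ c ∈ C, c i = c j ∧ x = c ∘ f)
    (hs : ∀ w ∈ shadow C, 2 ≤ wt w) {y : Fin N → ZMod 2} (hy : y ∈ shadow C)
    (hyi : y i = 1) (hyj : y j = 0) : y ∘ f ∈ shadow C' := by
  refine ⟨fun x hx hx4 => ?_, fun hyC' => ?_⟩
  · obtain ⟨c, hc, hcij, rfl⟩ := (hC' x).mp hx
    have hwt := wt_eq_val_add_val_add_wt_comp hij hf hr c
    have hinn := inn_eq_add_add_inn_comp hij hf hr y c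
    have hval := hD.two_mul_val_inn_of_mem_shadow hy hc
    have := (c i).val_lt
    have hyc : inn y c = c i := ZMod.val_injective 2 (by rw [← hcij] at hwt; omega)
    rw [hyi, hyj, one_mul, zero_mul, add_zero, hyc] at hinn
    exact left_eq_add.mp hinn
  · obtain ⟨c, hc, hcij, hcf⟩ := (hC' _).mp hyC'
    have hwt := wt_eq_val_add_val_add_wt_comp hij hf hr (y + c)
    have h0 : (y + c) ∘ f = 0 := by
      rw [Pi.add_comp, hcf]
      exact funext fun t => CharTwo.add_self_eq_zero _
    have hval : ∀ x : ZMod 2, (1 + x).val + x.val = 1 := by decide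
    rw [Pi.add_apply, Pi.add_apply, hyi, hyj, zero_add, ← hcij, hval, h0, wt_zero] at hwt
    have := hs _ (hD.add_mem_shadow hy hc)
    omega

lemma exists_mem_shadow_comp_eq (hD : IsSelfDual C)
    (hC' : ∀ x, x ∈ C' ↔ ∃ c ∈ C, c i = c j ∧ x = c ∘ f) {y : Fin N → ZMod 2}
    {u : Fin K → ZMod 2} (hy : y ∈ shadow C) (hu : u + y ∘ f ∈ C') :
    ∃ w ∈ shadow C, w ∘ f = u := by
  obtain ⟨c, hc, -, hcf⟩ := (hC' _).mp hu
  refine ⟨y + c, hD.add_mem_shadow hy hc, ?_⟩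
  have key : ∀ a b : ZMod 2, a + (b + a) = b := by decide
  rw [Pi.add_comp, ← hcf]
  exact funext fun t => key _ _

end IsSelfDual

theorem stmt_14_general (n d s : ℕ) (hd0 : d ≠ 0) (hs : 3 ≤ s)
    (C : Submodule (ZMod 2) (Fin (4*n+2) → ZMod 2))
    (hsd : IsSelfDual C)
    (hmin : HasMinDist C (d+2))
    (hsmin : (∃ y ∈ shadow C, wt y = s) ∧ ∀ y ∈ shadow C, s ≤ wt y) :
    ∃ i j : Fin (4*n+2), i ≠ j ∧
      ∀ f : Fin (4*n) → Fin (4*n+2), Function.Injective f →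
        Set.range f = ({i, j} : Set (Fin (4*n+2)))ᶜ →
        ∀ C' : Submodule (ZMod 2) (Fin (4*n) → ZMod 2),
          (C' : Set (Fin (4*n) → ZMod 2)) = {x | ∃ c ∈ C, c i = c j ∧ x = c ∘ f} →
          (∀ y ∈ shadow C', wt y % 4 = (s - 1) % 4) ∧
          (∃ y ∈ shadow C', wt y = s - 1) ∧
          ((∃ y ∈ shadow C', wt y = s - 1) ∧ ∀ y ∈ shadow C', s - 1 ≤ wt y) := by
  obtain ⟨⟨y, hy, hys⟩, hs_le⟩ := hsmin
  obtain ⟨i, j, hyi, hyj⟩ := hsd.exists_eq_one_and_eq_zero_of_mem_shadow hy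
  have hij : i ≠ j := fun h => one_ne_zero (hyi.symm.trans (h ▸ hyj))
  refine ⟨i, j, hij, fun f hf hr C' hC' => ?_⟩
  have hmemC' : ∀ x, x ∈ C' ↔ ∃ c ∈ C, c i = c j ∧ x = c ∘ f := fun x => Set.ext_iff.mp hC' x
  have hsd' : IsSelfDual C' := hsd.subtract hij hf hr
    (hsd.exists_mem_add_eq_one hij hf hr fun c hc hc0 => by have := hmin.2 c hc hc0; omega) hmemC'
  have hy' : y ∘ f ∈ shadow C' := hsd.comp_mem_shadow_subtract hij hf hr hmemC'
    (fun w hw => by have := hs_le w hw; omega) hy hyi hyj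
  have hwt_y' : wt (y ∘ f) = s - 1 := by
    have := wt_eq_val_add_val_add_wt_comp hij hf hr y
    rw [hyi, hyj, ZMod.val_one, ZMod.val_zero] at this
    omega
  have hcong : ∀ u ∈ shadow C', wt u % 4 = (s - 1) % 4 :=
    fun u hu => hwt_y' ▸ hsd'.wt_mod_four_eq_of_mem_shadow hu hy'
  have hlow : ∀ u ∈ shadow C', s - 1 ≤ wt u := by
    intro u hu
    obtain ⟨w, hw, rfl⟩ :=
      hsd.exists_mem_shadow_comp_eq hmemC' hy (hsd'.add_mem_of_mem_shadow hu hy')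
    have := hs_le w hw
    have := wt_le_wt_comp_add_two hij hf hr w
    have := hcong _ hu
    omega
  exact ⟨hcong, ⟨y ∘ f, hy', hwt_y'⟩, ⟨y ∘ f, hy', hwt_y'⟩, hlow⟩

theorem stmt_14 (n d s : ℕ) (hd4 : d % 4 = 0) (hd0 : d ≠ 0) (hs : 3 ≤ s)
    (C : Submodule (ZMod 2) (Fin (4*n+2) → ZMod 2))
    (hsd : IsSelfDual C) (hT : ∃ c ∈ C, wt c % 4 = 2)
    (hmin : HasMinDist C (d+2))
    (hsmin : (∃ y ∈ shadow C, wt y = s) ∧ ∀ y ∈ shadow C, s ≤ wt y) :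
    ∃ i j : Fin (4*n+2), i ≠ j ∧
      ∀ f : Fin (4*n) → Fin (4*n+2), Function.Injective f →
        Set.range f = ({i, j} : Set (Fin (4*n+2)))ᶜ →
        ∀ C' : Submodule (ZMod 2) (Fin (4*n) → ZMod 2),
          (C' : Set (Fin (4*n) → ZMod 2)) = {x | ∃ c ∈ C, c i = c j ∧ x = c ∘ f} →
          (∀ y ∈ shadow C', wt y % 4 = (s - 1) % 4) ∧
          (∃ y ∈ shadow C', wt y = s - 1) ∧
          ((∃ y ∈ shadow C', wt y = s - 1) ∧ ∀ y ∈ shadow C', s - 1 ≤ wt y) :=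
  stmt_14_general n d s hd0 hs C hsd hmin hsmin
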